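/- Under the same hypotheses, for every ε ∈ (0,1): ‖x_d u_{x_i x_j}‖_{C([0,T]×H̄)} ≤ ε ‖u‖_{C^{2+α}_s([0,T]×H̄)} + C ε^{-m} ‖u‖_{C([0,T]×H̄)} for all 1 ≤ i,j ≤ d, where m = m(d,α) and C = C(T,R,d,α). -/

import Mathlib

/-!
A step of length `η²` in the direction `x_j` moves a point of `H̄` by cycloidal distance at
most `η`, so the mean value theorem gives `|∂_j g(P)| ≤ [∂_j g]_α η^α + 2 ‖g‖_C / η²`.
With `g = u` this bounds `‖u_{x_i}‖_C`; with `g = u_{x_i}` and the weight `x_d`, which stays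
below `R + 1` along the step when `P` is in the support of `u` (beyond it `u_{x_i x_j} = 0`),
it bounds `‖x_d u_{x_i x_j}‖_C` by `[x_d u_{x_i x_j}]_α` and `‖u_{x_i}‖_C`. Choosing the two
step lengths as suitable powers of `ε` gives the estimate with `m = (2 + 2/α)(2/α)`.
-/

/-- The cycloidal distance. -/
noncomputable def cyc (d : ℕ) (P Q : ℝ × (Fin (d + 1) → ℝ)) : ℝ :=
  (∑ i, |P.2 i - Q.2 i|) /
      (Real.sqrt (P.2 (Fin.last d)) + Real.sqrt (Q.2 (Fin.last d)) +
        Real.sqrt (∑ i : Fin d, |P.2 i.castSucc - Q.2 i.castSucc|)) +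
    Real.sqrt |P.1 - Q.1|

/-- The closed space-time domain `[0,T] × H̄`. -/
def domT (d : ℕ) (T : ℝ) : Set (ℝ × (Fin (d + 1) → ℝ)) :=
  {P | P.1 ∈ Set.Icc 0 T ∧ 0 ≤ P.2 (Fin.last d)}

/-- Sup norm of `f` over a set `S`. -/
noncomputable def supN (d : ℕ) (S : Set (ℝ × (Fin (d + 1) → ℝ)))
    (f : ℝ × (Fin (d + 1) → ℝ) → ℝ) : ℝ :=
  sSup ((fun P => |f P|) '' S)

/-- Cycloidal Hölder seminorm of exponent `α` of `f` over a set `S`. -/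
noncomputable def semiS (d : ℕ) (α : ℝ) (S : Set (ℝ × (Fin (d + 1) → ℝ)))
    (f : ℝ × (Fin (d + 1) → ℝ) → ℝ) : ℝ :=
  sSup ((fun PQ : (ℝ × (Fin (d + 1) → ℝ)) × (ℝ × (Fin (d + 1) → ℝ)) =>
    |f PQ.1 - f PQ.2| / (cyc d PQ.1 PQ.2) ^ α) '' (S ×ˢ S))

/-- Cycloidal Hölder norm `‖f‖_{C^α_s(S)}`. -/
noncomputable def holderS (d : ℕ) (α : ℝ) (S : Set (ℝ × (Fin (d + 1) → ℝ)))
    (f : ℝ × (Fin (d + 1) → ℝ) → ℝ) : ℝ :=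
  supN d S f + semiS d α S f

/-- The Daskalopoulos–Hamilton–Koch norm `‖u‖_{C^{2+α}_s(S)}`, expressed in terms
of `u`, its time derivative `ut`, spatial first derivatives `ux i`, and spatial
second derivatives `uxx i j`. -/
noncomputable def norm2S (d : ℕ) (α : ℝ) (S : Set (ℝ × (Fin (d + 1) → ℝ)))
    (u ut : ℝ × (Fin (d + 1) → ℝ) → ℝ)
    (ux : Fin (d + 1) → ℝ × (Fin (d + 1) → ℝ) → ℝ)
    (uxx : Fin (d + 1) → Fin (d + 1) → ℝ × (Fin (d + 1) → ℝ) → ℝ) : ℝ :=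
  holderS d α S u + holderS d α S ut + (⨆ i, holderS d α S (ux i)) +
    ⨆ i, ⨆ j, holderS d α S (fun P => P.2 (Fin.last d) * uxx i j P)

/-- Finiteness (boundedness) of all the quantities entering `norm2S`. -/
def FinNorm2 (d : ℕ) (α : ℝ) (S : Set (ℝ × (Fin (d + 1) → ℝ)))
    (u ut : ℝ × (Fin (d + 1) → ℝ) → ℝ)
    (ux : Fin (d + 1) → ℝ × (Fin (d + 1) → ℝ) → ℝ)
    (uxx : Fin (d + 1) → Fin (d + 1) → ℝ × (Fin (d + 1) → ℝ) → ℝ) : Prop :=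
  (BddAbove ((fun P => |u P|) '' S) ∧
    BddAbove ((fun PQ : (ℝ × (Fin (d + 1) → ℝ)) × (ℝ × (Fin (d + 1) → ℝ)) =>
      |u PQ.1 - u PQ.2| / (cyc d PQ.1 PQ.2) ^ α) '' (S ×ˢ S))) ∧
  (BddAbove ((fun P => |ut P|) '' S) ∧
    BddAbove ((fun PQ : (ℝ × (Fin (d + 1) → ℝ)) × (ℝ × (Fin (d + 1) → ℝ)) =>
      |ut PQ.1 - ut PQ.2| / (cyc d PQ.1 PQ.2) ^ α) '' (S ×ˢ S))) ∧
  (∀ i, BddAbove ((fun P => |ux i P|) '' S) ∧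
    BddAbove ((fun PQ : (ℝ × (Fin (d + 1) → ℝ)) × (ℝ × (Fin (d + 1) → ℝ)) =>
      |ux i PQ.1 - ux i PQ.2| / (cyc d PQ.1 PQ.2) ^ α) '' (S ×ˢ S))) ∧
  (∀ i j, BddAbove ((fun P => |P.2 (Fin.last d) * uxx i j P|) '' S) ∧
    BddAbove ((fun PQ : (ℝ × (Fin (d + 1) → ℝ)) × (ℝ × (Fin (d + 1) → ℝ)) =>
      |PQ.1.2 (Fin.last d) * uxx i j PQ.1 - PQ.2.2 (Fin.last d) * uxx i j PQ.2| /
        (cyc d PQ.1 PQ.2) ^ α) '' (S ×ˢ S)))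

/-- `ut`, `ux`, `uxx` really are the (one-sided, within the domain) time
derivative, first and second spatial partial derivatives of `u` on `[0,T] × H̄`. -/
def IsDerivs (d : ℕ) (T : ℝ) (u ut : ℝ × (Fin (d + 1) → ℝ) → ℝ)
    (ux : Fin (d + 1) → ℝ × (Fin (d + 1) → ℝ) → ℝ)
    (uxx : Fin (d + 1) → Fin (d + 1) → ℝ × (Fin (d + 1) → ℝ) → ℝ) : Prop :=
  (∀ P ∈ domT d T, HasDerivWithinAt (fun τ => u (τ, P.2)) (ut P) (Set.Icc 0 T) P.1) ∧
  (∀ P ∈ domT d T, ∀ i, HasDerivWithinAt (fun s => u (P.1, Function.update P.2 i s))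
      (ux i P) {s : ℝ | 0 ≤ Function.update P.2 i s (Fin.last d)} (P.2 i)) ∧
  (∀ P ∈ domT d T, ∀ i j, HasDerivWithinAt (fun s => ux i (P.1, Function.update P.2 j s))
      (uxx i j P) {s : ℝ | 0 ≤ Function.update P.2 j s (Fin.last d)} (P.2 j))

/-- `u` has (spatial) compact support in the closed Euclidean ball `B̄_R(x⁰)`. -/
def SuppBall (d : ℕ) (R : ℝ) (x0 : Fin (d + 1) → ℝ)
    (u : ℝ × (Fin (d + 1) → ℝ) → ℝ) : Prop :=
  ∀ P : ℝ × (Fin (d + 1) → ℝ), R < Real.sqrt (∑ i, (P.2 i - x0 i) ^ 2) → u P = 0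


open Set Filter Topology Function

section Geometry

variable {d : ℕ}

lemma domT_nonempty {T : ℝ} (hT : 0 ≤ T) : (domT d T).Nonempty :=
  ⟨(0, 0), left_mem_Icc.2 hT, le_rfl⟩

lemma Ici_subset_setOf_update_last_nonneg {x : Fin (d + 1) → ℝ} (hx : 0 ≤ x (Fin.last d))
    (j : Fin (d + 1)) : Ici (x j) ⊆ {s : ℝ | 0 ≤ update x j s (Fin.last d)} := by
  intro s hs
  by_cases hj : j = Fin.last d
  · subst hj
    simpa using hx.trans hs
  · simpa [update_of_ne (Ne.symm hj)] using hx

lemma update_mem_domT {T : ℝ} {P : ℝ × (Fin (d + 1) → ℝ)} (hP : P ∈ domT d T)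
    {j : Fin (d + 1)} {s : ℝ} (hs : P.2 j ≤ s) : (P.1, update P.2 j s) ∈ domT d T :=
  ⟨hP.1, Ici_subset_setOf_update_last_nonneg hP.2 j hs⟩

lemma update_last_le {x : Fin (d + 1) → ℝ} {j : Fin (d + 1)} {s : ℝ} (hs : x j ≤ s) :
    update x j s (Fin.last d) ≤ x (Fin.last d) + (s - x j) := by
  by_cases hj : j = Fin.last d
  · subst hj
    simp
  · simp only [update_of_ne (Ne.symm hj)]
    linarith

lemma sum_abs_sub_update {ι : Type*} [Fintype ι] [DecidableEq ι] (x : ι → ℝ) (j : ι) (c : ℝ) :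
    ∑ i, |x i - update x j c i| = |x j - c| := by
  rw [Finset.sum_eq_single j (fun i _ hij => by simp [update_of_ne hij]) (by simp)]
  simp

lemma sqrt_sub_le_sqrt_add_sqrt_add_sqrt {x : Fin (d + 1) → ℝ} (hx : 0 ≤ x (Fin.last d))
    {j : Fin (d + 1)} {c : ℝ} (hc : x j < c) :
    √(c - x j) ≤ √(x (Fin.last d)) + √(update x j c (Fin.last d)) +
      √(∑ i : Fin d, |x i.castSucc - update x j c i.castSucc|) := by
  have h0 := Real.sqrt_nonneg (x (Fin.last d))
  rcases Fin.eq_castSucc_or_eq_last j with ⟨j, rfl⟩ | rfl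
  · have htan :
        ∑ i : Fin d, |x i.castSucc - update x j.castSucc c i.castSucc| = c - x j.castSucc := by
      have := sum_abs_sub_update (x ∘ Fin.castSucc) j c
      rw [← update_comp_eq_of_injective x (Fin.castSucc_injective d)] at this
      simp only [comp_apply] at this
      rw [this, abs_sub_comm, abs_of_pos (sub_pos.mpr hc)]
    rw [htan]
    have := Real.sqrt_nonneg (update x j.castSucc c (Fin.last d))
    linarith
  · have : √(c - x (Fin.last d)) ≤ √c := Real.sqrt_le_sqrt (by linarith)
    have := Real.sqrt_nonneg (∑ i : Fin d, |x i.castSucc - update x (Fin.last d) c i.castSucc|)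
    simp only [update_self]
    linarith

lemma cyc_update_mem_Ioc {P : ℝ × (Fin (d + 1) → ℝ)} (hP : 0 ≤ P.2 (Fin.last d))
    {j : Fin (d + 1)} {c : ℝ} (hc : P.2 j < c) :
    cyc d P (P.1, update P.2 j c) ∈ Ioc 0 √(c - P.2 j) := by
  have hδ : 0 < c - P.2 j := sub_pos.mpr hc
  have hden := sqrt_sub_le_sqrt_add_sqrt_add_sqrt hP hc
  have hsqrt : 0 < √(c - P.2 j) := Real.sqrt_pos.mpr hδ
  unfold cyc
  simp only [sum_abs_sub_update, sub_self, abs_zero, Real.sqrt_zero, add_zero,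
    abs_sub_comm (P.2 j), abs_of_pos hδ]
  refine ⟨div_pos hδ (hsqrt.trans_le hden), ?_⟩
  calc (c - P.2 j) / _ ≤ (c - P.2 j) / √(c - P.2 j) :=
        div_le_div_of_nonneg_left hδ.le hsqrt hden
    _ = √(c - P.2 j) := Real.div_sqrt

end Geometry

section Calculus

variable {d : ℕ}

lemma uniqueDiffWithinAt_setOf_update_last_nonneg {x : Fin (d + 1) → ℝ}
    (hx : 0 ≤ x (Fin.last d)) (j : Fin (d + 1)) :
    UniqueDiffWithinAt ℝ {s : ℝ | 0 ≤ update x j s (Fin.last d)} (x j) :=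
  (uniqueDiffOn_Ici (x j) (x j) self_mem_Ici).mono
    (Ici_subset_setOf_update_last_nonneg hx j)

lemma exists_update_eq_slope {T : ℝ} {g G : ℝ × (Fin (d + 1) → ℝ) → ℝ} {j : Fin (d + 1)}
    (hder : ∀ Q ∈ domT d T, HasDerivWithinAt (fun s => g (Q.1, update Q.2 j s))
      (G Q) {s : ℝ | 0 ≤ update Q.2 j s (Fin.last d)} (Q.2 j))
    {P : ℝ × (Fin (d + 1) → ℝ)} (hP : P ∈ domT d T) {h : ℝ} (hh : 0 < h) :
    ∃ c ∈ Ioo (P.2 j) (P.2 j + h),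
      G (P.1, update P.2 j c) = (g (P.1, update P.2 j (P.2 j + h)) - g P) / h := by
  have hsub := Ici_subset_setOf_update_last_nonneg hP.2 j
  have hφ : ∀ s, P.2 j ≤ s → HasDerivWithinAt (fun s => g (P.1, update P.2 j s))
      (G (P.1, update P.2 j s)) {s : ℝ | 0 ≤ update P.2 j s (Fin.last d)} s := fun s hs => by
    simpa using hder _ (update_mem_domT hP hs)
  obtain ⟨c, hc, heq⟩ := exists_hasDerivAt_eq_slope (fun s => g (P.1, update P.2 j s))
    (fun s => G (P.1, update P.2 j s)) (lt_add_of_pos_right _ hh)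
    (fun s hs => ((hφ s hs.1).continuousWithinAt).mono (Icc_subset_Ici_self.trans hsub))
    (fun s hs => (hφ s hs.1.le).hasDerivAt
      (mem_of_superset (Ioi_mem_nhds hs.1) (Ioi_subset_Ici_self.trans hsub)))
  refine ⟨c, hc, ?_⟩
  simpa using heq

lemma HasDerivWithinAt.eq_zero_of_eventually_eq_zero {φ : ℝ → ℝ} {φ' x : ℝ} {D : Set ℝ}
    (h : HasDerivWithinAt φ φ' D x) (hD : UniqueDiffWithinAt ℝ D x) (hx : x ∈ D)
    (hφ : ∀ᶠ s in 𝓝[D] x, φ s = 0) : φ' = 0 :=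
  hD.eq_deriv _ h ((hasDerivWithinAt_const x D 0).congr_of_eventuallyEq hφ
    (hφ.self_of_nhdsWithin hx))

def FarFrom (d : ℕ) (R : ℝ) (x0 y : Fin (d + 1) → ℝ) : Prop :=
  R < √(∑ i, (y i - x0 i) ^ 2)

lemma eventually_farFrom_update {R : ℝ} {x0 y : Fin (d + 1) → ℝ} (hy : FarFrom d R x0 y)
    (j : Fin (d + 1)) : ∀ᶠ s in 𝓝 (y j), FarFrom d R x0 (update y j s) := by
  have hopen : IsOpen {z : Fin (d + 1) → ℝ | FarFrom d R x0 z} :=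
    isOpen_lt continuous_const (by fun_prop)
  have hcont : Continuous fun s : ℝ => update y j s := continuous_const.update j continuous_id
  exact hcont.continuousAt.preimage_mem_nhds (by rw [update_eq_self]; exact hopen.mem_nhds hy)

lemma farFrom_of_lt_last {R : ℝ} {x0 y : Fin (d + 1) → ℝ} (hx0 : x0 (Fin.last d) = 0)
    (hy : R < y (Fin.last d)) : FarFrom d R x0 y := by
  refine hy.trans_le ((le_abs_self _).trans (Real.abs_le_sqrt ?_))
  simpa [hx0] using Finset.single_le_sum (f := fun i => (y i - x0 i) ^ 2)
    (fun i _ => sq_nonneg _) (Finset.mem_univ (Fin.last d))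

lemma eq_zero_of_farFrom_of_hasDerivWithinAt {T R : ℝ} {x0 : Fin (d + 1) → ℝ}
    {g : ℝ × (Fin (d + 1) → ℝ) → ℝ}
    (hg : ∀ Q ∈ domT d T, FarFrom d R x0 Q.2 → g Q = 0)
    {P : ℝ × (Fin (d + 1) → ℝ)} (hP : P ∈ domT d T) (hfar : FarFrom d R x0 P.2)
    {j : Fin (d + 1)} {G' : ℝ} (hder : HasDerivWithinAt (fun s => g (P.1, update P.2 j s)) G'
      {s : ℝ | 0 ≤ update P.2 j s (Fin.last d)} (P.2 j)) : G' = 0 := by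
  refine hder.eq_zero_of_eventually_eq_zero
    (uniqueDiffWithinAt_setOf_update_last_nonneg hP.2 j) (by simpa using hP.2) ?_
  filter_upwards [nhdsWithin_le_nhds (eventually_farFrom_update hfar j), self_mem_nhdsWithin]
    with s hs hmem
  exact hg _ ⟨hP.1, hmem⟩ hs

lemma uxx_eq_zero_of_farFrom {T R : ℝ} {x0 : Fin (d + 1) → ℝ}
    {u ut : ℝ × (Fin (d + 1) → ℝ) → ℝ} {ux : Fin (d + 1) → ℝ × (Fin (d + 1) → ℝ) → ℝ}
    {uxx : Fin (d + 1) → Fin (d + 1) → ℝ × (Fin (d + 1) → ℝ) → ℝ}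
    (hsupp : SuppBall d R x0 u) (hder : IsDerivs d T u ut ux uxx)
    {P : ℝ × (Fin (d + 1) → ℝ)} (hP : P ∈ domT d T) (hfar : FarFrom d R x0 P.2)
    (i j : Fin (d + 1)) : uxx i j P = 0 :=
  eq_zero_of_farFrom_of_hasDerivWithinAt
    (fun Q hQ hQfar => eq_zero_of_farFrom_of_hasDerivWithinAt (fun Q' _ => hsupp Q')
      hQ hQfar (hder.2.1 Q hQ i))
    hP hfar (hder.2.2 P hP i j)

end Calculus

section Norms

variable {d : ℕ} {α : ℝ} {S : Set (ℝ × (Fin (d + 1) → ℝ))} {f : ℝ × (Fin (d + 1) → ℝ) → ℝ}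

lemma abs_le_supN (hb : BddAbove ((fun P => |f P|) '' S)) {P : ℝ × (Fin (d + 1) → ℝ)}
    (hP : P ∈ S) : |f P| ≤ supN d S f :=
  le_csSup hb ⟨P, hP, rfl⟩

lemma supN_nonneg (hS : S.Nonempty) (hb : BddAbove ((fun P => |f P|) '' S)) :
    0 ≤ supN d S f :=
  (abs_nonneg _).trans (abs_le_supN hb hS.some_mem)

lemma supN_le (hS : S.Nonempty) {B : ℝ} (h : ∀ P ∈ S, |f P| ≤ B) : supN d S f ≤ B :=
  csSup_le (hS.image _) (by rintro _ ⟨P, hP, rfl⟩; exact h P hP)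

lemma abs_sub_le_semiS_mul
    (hb : BddAbove ((fun PQ : (ℝ × (Fin (d + 1) → ℝ)) × (ℝ × (Fin (d + 1) → ℝ)) =>
      |f PQ.1 - f PQ.2| / (cyc d PQ.1 PQ.2) ^ α) '' (S ×ˢ S)))
    {P Q : ℝ × (Fin (d + 1) → ℝ)} (hP : P ∈ S) (hQ : Q ∈ S) (hc : 0 < cyc d P Q) :
    |f P - f Q| ≤ semiS d α S f * cyc d P Q ^ α :=
  (div_le_iff₀ (Real.rpow_pos_of_pos hc α)).mp (le_csSup hb ⟨(P, Q), ⟨hP, hQ⟩, rfl⟩)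

lemma semiS_nonneg (hS : S.Nonempty)
    (hb : BddAbove ((fun PQ : (ℝ × (Fin (d + 1) → ℝ)) × (ℝ × (Fin (d + 1) → ℝ)) =>
      |f PQ.1 - f PQ.2| / (cyc d PQ.1 PQ.2) ^ α) '' (S ×ˢ S))) :
    0 ≤ semiS d α S f := by
  obtain ⟨P, hP⟩ := hS
  refine le_trans ?_ (le_csSup hb ⟨(P, P), ⟨hP, hP⟩, rfl⟩)
  simp

lemma holderS_nonneg (hS : S.Nonempty) (hb₁ : BddAbove ((fun P => |f P|) '' S))
    (hb₂ : BddAbove ((fun PQ : (ℝ × (Fin (d + 1) → ℝ)) × (ℝ × (Fin (d + 1) → ℝ)) =>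
      |f PQ.1 - f PQ.2| / (cyc d PQ.1 PQ.2) ^ α) '' (S ×ˢ S))) :
    0 ≤ holderS d α S f :=
  add_nonneg (supN_nonneg hS hb₁) (semiS_nonneg hS hb₂)

lemma semiS_le_holderS (hS : S.Nonempty) (hb : BddAbove ((fun P => |f P|) '' S)) :
    semiS d α S f ≤ holderS d α S f :=
  le_add_of_nonneg_left (supN_nonneg hS hb)

variable {u ut : ℝ × (Fin (d + 1) → ℝ) → ℝ} {ux : Fin (d + 1) → ℝ × (Fin (d + 1) → ℝ) → ℝ}
  {uxx : Fin (d + 1) → Fin (d + 1) → ℝ × (Fin (d + 1) → ℝ) → ℝ}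

lemma semiS_ux_le_norm2S (hS : S.Nonempty) (hfin : FinNorm2 d α S u ut ux uxx)
    (i : Fin (d + 1)) : semiS d α S (ux i) ≤ norm2S d α S u ut ux uxx := by
  obtain ⟨⟨hu₁, hu₂⟩, ⟨hut₁, hut₂⟩, hux, huxx⟩ := hfin
  have hi : holderS d α S (ux i) ≤ ⨆ k, holderS d α S (ux k) :=
    le_ciSup (f := fun k => holderS d α S (ux k)) (finite_range _).bddAbove i
  have hxx : 0 ≤ ⨆ k, ⨆ l, holderS d α S (fun P => P.2 (Fin.last d) * uxx k l P) :=
    Real.iSup_nonneg fun k => Real.iSup_nonneg fun l =>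
      holderS_nonneg hS (huxx k l).1 (huxx k l).2
  have := semiS_le_holderS (α := α) hS (hux i).1
  have := holderS_nonneg hS hu₁ hu₂
  have := holderS_nonneg hS hut₁ hut₂
  unfold norm2S
  linarith

lemma semiS_weighted_uxx_le_norm2S (hS : S.Nonempty) (hfin : FinNorm2 d α S u ut ux uxx)
    (i j : Fin (d + 1)) :
    semiS d α S (fun P => P.2 (Fin.last d) * uxx i j P) ≤ norm2S d α S u ut ux uxx := by
  obtain ⟨⟨hu₁, hu₂⟩, ⟨hut₁, hut₂⟩, hux, huxx⟩ := hfin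
  have hij : holderS d α S (fun P => P.2 (Fin.last d) * uxx i j P) ≤
      ⨆ k, ⨆ l, holderS d α S (fun P => P.2 (Fin.last d) * uxx k l P) :=
    (le_ciSup (finite_range _).bddAbove j).trans
      (le_ciSup (f := fun k => ⨆ l, holderS d α S (fun P => P.2 (Fin.last d) * uxx k l P))
        (finite_range _).bddAbove i)
  have hx : 0 ≤ ⨆ k, holderS d α S (ux k) :=
    Real.iSup_nonneg fun k => holderS_nonneg hS (hux k).1 (hux k).2
  have := semiS_le_holderS (α := α) hS (huxx i j).1
  have := holderS_nonneg hS hu₁ hu₂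
  have := holderS_nonneg hS hut₁ hut₂
  unfold norm2S
  linarith

end Norms

section Interpolation

variable {d : ℕ} {α T : ℝ}

lemma abs_mul_le_semiS_mul_rpow_add (hα : 0 ≤ α) {g G w : ℝ × (Fin (d + 1) → ℝ) → ℝ}
    {j : Fin (d + 1)}
    (hder : ∀ Q ∈ domT d T, HasDerivWithinAt (fun s => g (Q.1, update Q.2 j s))
      (G Q) {s : ℝ | 0 ≤ update Q.2 j s (Fin.last d)} (Q.2 j))
    (hg : BddAbove ((fun P => |g P|) '' domT d T))
    (hwG : BddAbove ((fun PQ : (ℝ × (Fin (d + 1) → ℝ)) × (ℝ × (Fin (d + 1) → ℝ)) =>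
      |w PQ.1 * G PQ.1 - w PQ.2 * G PQ.2| / (cyc d PQ.1 PQ.2) ^ α) '' (domT d T ×ˢ domT d T)))
    {P : ℝ × (Fin (d + 1) → ℝ)} (hP : P ∈ domT d T) {η W : ℝ} (hη : 0 < η)
    (hW : ∀ s ∈ Ioo (P.2 j) (P.2 j + η ^ 2), |w (P.1, update P.2 j s)| ≤ W) :
    |w P * G P| ≤ semiS d α (domT d T) (fun Q => w Q * G Q) * η ^ α +
      W * (2 * supN d (domT d T) g) / η ^ 2 := by
  obtain ⟨c, hc, hslope⟩ := exists_update_eq_slope hder hP (pow_pos hη 2)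
  have hQ : (P.1, update P.2 j c) ∈ domT d T := update_mem_domT hP hc.1.le
  obtain ⟨hcyc₀, hcyc⟩ := cyc_update_mem_Ioc hP.2 hc.1
  have hcycη : cyc d P (P.1, update P.2 j c) ≤ η := by
    refine hcyc.trans ?_
    rw [← Real.sqrt_sq hη.le]
    exact Real.sqrt_le_sqrt (by linarith [hc.2])
  have hnear : |w P * G P - w (P.1, update P.2 j c) * G (P.1, update P.2 j c)| ≤
      semiS d α (domT d T) (fun Q => w Q * G Q) * η ^ α :=
    (abs_sub_le_semiS_mul (f := fun Q => w Q * G Q) hwG hP hQ hcyc₀).trans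
      (mul_le_mul_of_nonneg_left (Real.rpow_le_rpow hcyc₀.le hcycη hα)
        (semiS_nonneg (f := fun Q => w Q * G Q) ⟨P, hP⟩ hwG))
  have hG : |G (P.1, update P.2 j c)| ≤ 2 * supN d (domT d T) g / η ^ 2 := by
    rw [hslope, abs_div, abs_of_pos (pow_pos hη 2)]
    gcongr
    linarith [abs_sub (g (P.1, update P.2 j (P.2 j + η ^ 2))) (g P),
      abs_le_supN hg (update_mem_domT hP (j := j) (le_add_of_nonneg_right (sq_nonneg η))),
      abs_le_supN hg hP]
  have hwGQ : |w (P.1, update P.2 j c) * G (P.1, update P.2 j c)| ≤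
      W * (2 * supN d (domT d T) g / η ^ 2) := by
    rw [abs_mul]
    exact mul_le_mul (hW c hc) hG (abs_nonneg _) ((abs_nonneg _).trans (hW c hc))
  rw [mul_div_assoc]
  linarith [abs_sub_abs_le_abs_sub (w P * G P)
    (w (P.1, update P.2 j c) * G (P.1, update P.2 j c))]

variable {u ut : ℝ × (Fin (d + 1) → ℝ) → ℝ} {ux : Fin (d + 1) → ℝ × (Fin (d + 1) → ℝ) → ℝ}
  {uxx : Fin (d + 1) → Fin (d + 1) → ℝ × (Fin (d + 1) → ℝ) → ℝ}

lemma supN_ux_le (hα : 0 ≤ α) (hT : 0 ≤ T) (hder : IsDerivs d T u ut ux uxx)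
    (hfin : FinNorm2 d α (domT d T) u ut ux uxx) (i : Fin (d + 1)) {η : ℝ} (hη : 0 < η) :
    supN d (domT d T) (ux i) ≤
      semiS d α (domT d T) (ux i) * η ^ α + 2 * supN d (domT d T) u / η ^ 2 := by
  refine supN_le (domT_nonempty hT) fun P hP => ?_
  simpa using abs_mul_le_semiS_mul_rpow_add hα (w := fun _ => 1) (fun Q hQ => hder.2.1 Q hQ i)
    hfin.1.1 (by simpa using (hfin.2.2.1 i).2) hP hη (W := 1) (fun _ _ => by simp)

lemma supN_weighted_uxx_le {R : ℝ} {x0 : Fin (d + 1) → ℝ} (hα : 0 ≤ α) (hT : 0 ≤ T)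
    (hR : 0 ≤ R) (hx0 : x0 (Fin.last d) = 0) (hsupp : SuppBall d R x0 u)
    (hder : IsDerivs d T u ut ux uxx) (hfin : FinNorm2 d α (domT d T) u ut ux uxx)
    (i j : Fin (d + 1)) {η : ℝ} (hη : 0 < η) (hη₁ : η ≤ 1) :
    supN d (domT d T) (fun P => P.2 (Fin.last d) * uxx i j P) ≤
      semiS d α (domT d T) (fun P => P.2 (Fin.last d) * uxx i j P) * η ^ α +
        2 * (R + 1) * supN d (domT d T) (ux i) / η ^ 2 := by
  have hS := domT_nonempty (d := d) hT
  refine supN_le hS fun P hP => ?_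
  by_cases hfar : R < P.2 (Fin.last d)
  · rw [uxx_eq_zero_of_farFrom hsupp hder hP (farFrom_of_lt_last hx0 hfar), mul_zero, abs_zero]
    have := semiS_nonneg (f := fun P => P.2 (Fin.last d) * uxx i j P) hS (hfin.2.2.2 i j).2
    have := supN_nonneg hS (hfin.2.2.1 i).1
    positivity
  · have hW : ∀ s ∈ Ioo (P.2 j) (P.2 j + η ^ 2), |update P.2 j s (Fin.last d)| ≤ R + 1 := by
      intro s hs
      rw [abs_of_nonneg (Ici_subset_setOf_update_last_nonneg hP.2 j hs.1.le)]
      linarith [update_last_le (x := P.2) hs.1.le, hs.2, pow_le_one₀ hη.le hη₁ (n := 2)]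
    have := abs_mul_le_semiS_mul_rpow_add hα (w := fun Q => Q.2 (Fin.last d))
      (fun Q hQ => hder.2.2 Q hQ i j) (hfin.2.2.1 i).1 (hfin.2.2.2 i j).2 hP hη hW
    linarith [show (R + 1) * (2 * supN d (domT d T) (ux i)) / η ^ 2 =
      2 * (R + 1) * supN d (domT d T) (ux i) / η ^ 2 by ring]

end Interpolation

section RealInterpolation

variable {α : ℝ}

noncomputable def interpolationExponent (α : ℝ) : ℝ := (2 + 2 / α) * (2 / α)

noncomputable def interpolationConstant (α K : ℝ) : ℝ :=
  2 ^ interpolationExponent α * K ^ (1 + 2 / α)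

lemma interpolationExponent_pos (hα : 0 < α) : 0 < interpolationExponent α := by
  unfold interpolationExponent
  positivity

lemma interpolationConstant_pos {K : ℝ} (hK : 0 < K) : 0 < interpolationConstant α K := by
  unfold interpolationConstant
  positivity

/-- Evaluating `X ≤ b η^α + Y / η²` at `η = ε^{1/α}`. -/
lemma le_mul_add_rpow_neg_mul_of_forall {X b Y : ℝ} (hα : 0 < α)
    (h : ∀ η : ℝ, 0 < η → η ≤ 1 → X ≤ b * η ^ α + Y / η ^ 2) {ε : ℝ} (hε : 0 < ε)
    (hε₁ : ε ≤ 1) : X ≤ b * ε + ε ^ (-(2 / α)) * Y := by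
  have := h (ε ^ α⁻¹) (Real.rpow_pos_of_pos hε _)
    (Real.rpow_le_one hε.le hε₁ (inv_nonneg.mpr hα.le))
  have hsq : (ε ^ α⁻¹) ^ 2 = ε ^ (2 / α) := by
    rw [← Real.rpow_natCast, ← Real.rpow_mul hε.le]
    congr 1
    push_cast
    ring
  rw [Real.rpow_inv_rpow hε.le hα.ne', hsq] at this
  rwa [Real.rpow_neg hε.le, ← div_eq_inv_mul]

lemma rpow_neg_mul_rpow_neg_eq (hα : 0 < α) {K ε : ℝ} (hK : 0 < K) (hε : 0 < ε) :
    K * (ε / 2) ^ (-(2 / α)) * ((ε / 2) ^ (1 + 2 / α) / K) ^ (-(2 / α)) =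
      interpolationConstant α K * ε ^ (-interpolationExponent α) := by
  have ht : 0 < ε / 2 := half_pos hε
  rw [mul_assoc, ← Real.mul_rpow ht.le (by positivity), mul_div_assoc',
    ← Real.rpow_one_add' ht.le (by positivity), Real.div_rpow (by positivity) hK.le,
    ← Real.rpow_mul ht.le, Real.div_rpow hε.le zero_le_two, interpolationConstant,
    interpolationExponent, Real.rpow_add hK, Real.rpow_one, Real.rpow_neg hK.le,
    show (1 + (1 + 2 / α)) * -(2 / α) = -((2 + 2 / α) * (2 / α)) by ring,
    Real.rpow_neg hε.le, Real.rpow_neg two_pos.le]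
  rw [div_inv_eq_mul, div_inv_eq_mul]
  ring

/-- Chaining two interpolation inequalities: `F` is controlled by `A` at scale `η`, and `A`
by `U` at scale `η'`; choosing `η^α = ε / 2` and `η'^α = (ε / 2)^{1 + 2/α} / K` makes the two
Hölder terms add up to at most `ε N`. -/
lemma le_mul_add_interpolationConstant_mul {K U A F a b N : ℝ} (hα : 0 < α) (hK : 1 ≤ K)
    (ha : a ≤ N) (hb : b ≤ N)
    (hA : ∀ η : ℝ, 0 < η → η ≤ 1 → A ≤ a * η ^ α + U / η ^ 2)
    (hF : ∀ η : ℝ, 0 < η → η ≤ 1 → F ≤ b * η ^ α + K * A / η ^ 2) {ε : ℝ} (hε : 0 < ε)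
    (hε₁ : ε ≤ 1) :
    F ≤ ε * N + interpolationConstant α K * ε ^ (-interpolationExponent α) * U := by
  set p := 2 / α
  have hK₀ : 0 < K := one_pos.trans_le hK
  have ht : 0 < ε / 2 := half_pos hε
  have ht₁ : ε / 2 ≤ 1 := by linarith
  have hstep₁ := le_mul_add_rpow_neg_mul_of_forall hα hF ht ht₁
  have hp : 0 ≤ 1 + p := by positivity
  have hε₂ : 0 < (ε / 2) ^ (1 + p) / K := by positivity
  have hε₂₁ : (ε / 2) ^ (1 + p) / K ≤ 1 :=
    div_le_one_of_le₀ ((Real.rpow_le_one ht.le ht₁ hp).trans hK) hK₀.le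
  have hstep₂ := le_mul_add_rpow_neg_mul_of_forall hα hA hε₂ hε₂₁
  have hcancel : K * (ε / 2) ^ (-p) * ((ε / 2) ^ (1 + p) / K) = ε / 2 := by
    rw [mul_comm K, mul_assoc, mul_div_cancel₀ _ hK₀.ne', ← Real.rpow_add ht,
      show -p + (1 + p) = 1 by ring, Real.rpow_one]
  have hconst := rpow_neg_mul_rpow_neg_eq hα hK₀ hε
  have hpos : 0 ≤ K * (ε / 2) ^ (-p) := by positivity
  calc F ≤ b * (ε / 2) + (ε / 2) ^ (-p) * (K * A) := hstep₁
    _ ≤ b * (ε / 2) + K * (ε / 2) ^ (-p) *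
          (a * ((ε / 2) ^ (1 + p) / K) + ((ε / 2) ^ (1 + p) / K) ^ (-p) * U) := by
        linarith [mul_le_mul_of_nonneg_left hstep₂ hpos]
    _ = (a + b) * (ε / 2) + interpolationConstant α K * ε ^ (-interpolationExponent α) * U := by
        rw [← hconst]
        linear_combination a * hcancel
    _ ≤ ε * N + interpolationConstant α K * ε ^ (-interpolationExponent α) * U := by
        linarith [mul_le_mul_of_nonneg_right (add_le_add ha hb) ht.le]

end RealInterpolation

theorem interpolation_weighted_second_deriv_sup_general (d : ℕ) (α : ℝ)
    (hα : α ∈ Set.Ioo (0 : ℝ) 1) :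
    ∃ m : ℝ, 0 < m ∧ ∀ T R : ℝ, 0 < T → 0 < R →
      ∃ C : ℝ, 0 < C ∧
        ∀ (u ut : ℝ × (Fin (d + 1) → ℝ) → ℝ)
          (ux : Fin (d + 1) → ℝ × (Fin (d + 1) → ℝ) → ℝ)
          (uxx : Fin (d + 1) → Fin (d + 1) → ℝ × (Fin (d + 1) → ℝ) → ℝ)
          (x0 : Fin (d + 1) → ℝ),
          x0 (Fin.last d) = 0 →
          SuppBall d R x0 u →
          IsDerivs d T u ut ux uxx →
          FinNorm2 d α (domT d T) u ut ux uxx →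
          ∀ ε ∈ Set.Ioo (0 : ℝ) 1, ∀ i j : Fin (d + 1),
            supN d (domT d T) (fun P => P.2 (Fin.last d) * uxx i j P) ≤
              ε * norm2S d α (domT d T) u ut ux uxx +
                C * ε ^ (-m) * supN d (domT d T) u := by
  refine ⟨interpolationExponent α, interpolationExponent_pos hα.1, fun T R hT hR =>
    ⟨2 * interpolationConstant α (2 * (R + 1)),
      mul_pos two_pos (interpolationConstant_pos (by linarith)), ?_⟩⟩
  intro u ut ux uxx x0 hx0 hsupp hder hfin ε hε i j
  have hS := domT_nonempty (d := d) hT.le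
  have := le_mul_add_interpolationConstant_mul hα.1 (K := 2 * (R + 1)) (by linarith)
    (semiS_ux_le_norm2S hS hfin i) (semiS_weighted_uxx_le_norm2S hS hfin i j)
    (fun η hη _ => supN_ux_le hα.1.le hT.le hder hfin i hη)
    (fun η hη hη₁ => supN_weighted_uxx_le hα.1.le hT.le hR.le hx0 hsupp hder hfin i j hη hη₁)
    hε.1 hε.2.le
  linarith

/-- Interpolation inequality (iv): under the same hypotheses, for every `ε ∈ (0,1)`
and all `1 ≤ i,j ≤ d`, `‖x_d u_{x_i x_j}‖_C ≤ ε ‖u‖_{C^{2+α}_s} + C ε^{-m} ‖u‖_C`,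
with `m = m(d,α) > 0` and `C = C(T,R,d,α) > 0`. -/
theorem interpolation_weighted_second_deriv_sup (d : ℕ) (hd : 1 ≤ d) (α : ℝ)
    (hα : α ∈ Set.Ioo (0 : ℝ) 1) :
    ∃ m : ℝ, 0 < m ∧ ∀ T R : ℝ, 0 < T → 0 < R →
      ∃ C : ℝ, 0 < C ∧
        ∀ (u ut : ℝ × (Fin (d + 1) → ℝ) → ℝ)
          (ux : Fin (d + 1) → ℝ × (Fin (d + 1) → ℝ) → ℝ)
          (uxx : Fin (d + 1) → Fin (d + 1) → ℝ × (Fin (d + 1) → ℝ) → ℝ)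
          (x0 : Fin (d + 1) → ℝ),
          x0 (Fin.last d) = 0 →
          SuppBall d R x0 u →
          IsDerivs d T u ut ux uxx →
          FinNorm2 d α (domT d T) u ut ux uxx →
          ∀ ε ∈ Set.Ioo (0 : ℝ) 1, ∀ i j : Fin (d + 1),
            supN d (domT d T) (fun P => P.2 (Fin.last d) * uxx i j P) ≤
              ε * norm2S d α (domT d T) u ut ux uxx +
                C * ε ^ (-m) * supN d (domT d T) u :=
  interpolation_weighted_second_deriv_sup_general d α hα
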